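/- Let G be a finite normal form game with strict preferences, a₀ ∈ A, k a positive integer, and I an admissible player function. Consider the NHP-constrained game, namely Γ(a₀,k,I) restricted so that at every node only actions satisfying the no-harm principle are available. Then the constrained game is a finite extensive form game with perfect information possessing a pure subgame perfect equilibrium, and every pure subgame perfect equilibrium of the constrained game is a no-harm equilibrium of Γ(a₀,k,I). -/

import Mathlib

namespace NoHarm

/-- A finite normal form game with `n` players: finite action sets `A i`,
nonempty, with decidable equality, and utility functions `u i : Profile → ℝ`. -/
structure Game (n : ℕ) where
  A : Fin n → Type
  fintypeA : ∀ i, Fintype (A i)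
  decA : ∀ i, DecidableEq (A i)
  neA : ∀ i, Nonempty (A i)
  u : Fin n → (∀ i, A i) → ℝ

attribute [instance] Game.fintypeA Game.decA Game.neA

/-- Action profiles of `G`. -/
abbrev Profile {n : ℕ} (G : Game n) : Type := ∀ i, G.A i

/-- A recorded move in the extensive form game `Γ`: the acting player together
with their choice (`none` = pass, `some a` = choose action `a`; choosing the
current component of the state is "staying", any other action is "moving"). -/
abbrev Move {n : ℕ} (G : Game n) : Type := Σ i : Fin n, Option (G.A i)

/-- A node of `Γ`, identified with the history of moves leading to it
(the root is `[]`). -/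
abbrev Hist {n : ℕ} (G : Game n) : Type := List (Move G)

variable {n : ℕ}

/-- One step of the left fold computing, along a history, the triple
(current state, current reference point, player who established the current
reference point by staying -- `none` for the initial reference point). -/
def stepFold (G : Game n) (x : Profile G × Profile G × Option (Fin n)) (m : Move G) :
    Profile G × Profile G × Option (Fin n) :=
  match m with
  | ⟨_, none⟩ => x
  | ⟨i, some a⟩ =>
    if a = x.1 i then (x.1, x.1, some i)
    else (Function.update x.1 i a, x.2.1, x.2.2)

/-- The (state, reference point, proposer) data at the node `h` of `Γ(a0,·,·)`. -/
def fold3 (G : Game n) (a0 : Profile G) (h : Hist G) :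
    Profile G × Profile G × Option (Fin n) :=
  h.foldl (stepFold G) (a0, a0, none)

/-- The state `S(x)` at a node. -/
def state (G : Game n) (a0 : Profile G) (h : Hist G) : Profile G := (fold3 G a0 h).1

/-- The reference point at a node (the most recent state at which a player
stayed, initially `a0`). -/
def refpt (G : Game n) (a0 : Profile G) (h : Hist G) : Profile G := (fold3 G a0 h).2.1

/-- The player who established the current reference point by staying
(`none` if it is still the initial reference point `a0`). -/
def proposer (G : Game n) (a0 : Profile G) (h : Hist G) : Option (Fin n) :=
  (fold3 G a0 h).2.2

/-- `m` is a stay action at the node `h`: the mover chooses exactly the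
component of the current state belonging to them. -/
def IsStay (G : Game n) (a0 : Profile G) (h : Hist G) (m : Move G) : Prop :=
  m.2 = some (state G a0 h m.1)

/-- Termination condition (i): one player stayed at a state `b`, making it
the reference point, and a different player subsequently also stays at `b`. -/
def TerminalStay (G : Game n) (a0 : Profile G) (h : Hist G) : Prop :=
  ∃ (h' : Hist G) (m : Move G) (i : Fin n),
    h = h' ++ [m] ∧ IsStay G a0 h' m ∧ refpt G a0 h' = state G a0 h' ∧
    proposer G a0 h' = some i ∧ i ≠ m.1

/-- Termination condition (ii): all `n` players consecutively pass
(the last `n` moves are passes and every player is among their movers). -/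
def TerminalPass (G : Game n) (h : Hist G) : Prop :=
  n ≤ h.length ∧ (∀ m ∈ h.drop (h.length - n), m.2 = none) ∧
    (∀ i : Fin n, ∃ m ∈ h.drop (h.length - n), m.1 = i)

/-- Terminal nodes of `Γ(a0,·,·)`. -/
def Terminal (G : Game n) (a0 : Profile G) (h : Hist G) : Prop :=
  TerminalStay G a0 h ∨ TerminalPass G h

/-- Number of predecessor nodes of `h` having the same state as `h` at which
the move `m` was made. -/
def countAct (G : Game n) (a0 : Profile G) (h : Hist G) (m : Move G) : ℕ :=
  ((Finset.range h.length).filter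
    (fun t => h[t]? = some m ∧ state G a0 (h.take t) = state G a0 h)).card

/-- Availability of the choice `c` for player `i` at node `h`: pass is always
available, and an action `a` is available iff `i` has chosen `a` at fewer than
`k` predecessor nodes carrying the same state as `h`. -/
def availAct (G : Game n) (a0 : Profile G) (k : ℕ) (h : Hist G) {i : Fin n}
    (c : Option (G.A i)) : Prop :=
  ∀ a : G.A i, c = some a → countAct G a0 h ⟨i, some a⟩ < k

/-- `h` is a (valid) node of the game tree of `Γ(a0,k,I)`: at each step the
recorded mover is the active player given by the player function `I`, the
chosen action was available, and no proper predecessor is terminal. -/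
structure IsNode (G : Game n) (a0 : Profile G) (k : ℕ) (I : Hist G → Fin n)
    (h : Hist G) : Prop where
  mover : ∀ (t : ℕ) (ht : t < h.length), (h.get ⟨t, ht⟩).1 = I (h.take t)
  avail : ∀ (t : ℕ) (ht : t < h.length), availAct G a0 k (h.take t) (h.get ⟨t, ht⟩).2
  nonterm : ∀ t < h.length, ¬ Terminal G a0 (h.take t)

/-- The player function is admissible: along every path of play the numbers of
nodes at which any two players have been active differ by at most one. -/
def Admissible (G : Game n) (a0 : Profile G) (k : ℕ) (I : Hist G → Fin n) : Prop :=
  ∀ h, IsNode G a0 k I h → ∀ i j : Fin n,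
    (h.map Sigma.fst).count i ≤ (h.map Sigma.fst).count j + 1

/-- A pure strategy of player `i`: a choice (pass or an action) at every node. -/
abbrev Strategy (G : Game n) (i : Fin n) : Type := Hist G → Option (G.A i)

/-- A pure strategy profile. -/
abbrev StratProfile (G : Game n) : Type := ∀ i, Strategy G i

/-- A strategy profile is valid if at every non-terminal node of the tree the
active player's prescribed choice is available. -/
def ValidProfile (G : Game n) (a0 : Profile G) (k : ℕ) (I : Hist G → Fin n)
    (σ : StratProfile G) : Prop :=
  ∀ h, IsNode G a0 k I h → ¬ Terminal G a0 h → availAct G a0 k h (σ (I h) h)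

open Classical in
/-- Play according to `σ` for (at most) the given number of steps from a node,
stopping at terminal nodes. -/
noncomputable def playN (G : Game n) (a0 : Profile G) (I : Hist G → Fin n)
    (σ : StratProfile G) : ℕ → Hist G → Hist G
  | 0, h => h
  | (t + 1), h =>
    if Terminal G a0 h then h
    else playN G a0 I σ t (h ++ [⟨I h, σ (I h) h⟩])

/-- A (generous) upper bound for the length of any play of `Γ(a0,k,I)`. -/
def bound (G : Game n) (k : ℕ) : ℕ :=
  ((k + 2) * (Fintype.card (Profile G) + 2) * ((∑ i, Fintype.card (G.A i)) + 2) + 2)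
    * (n + 2) * 4

/-- The outcome of `σ` in the subgame rooted at `h`: the reference point at the
terminal node reached by playing `σ` from `h`. -/
noncomputable def outcomeFrom (G : Game n) (a0 : Profile G) (k : ℕ)
    (I : Hist G → Fin n) (σ : StratProfile G) (h : Hist G) : Profile G :=
  refpt G a0 (playN G a0 I σ (bound G k + 1) h)

/-- The outcome of the strategy profile `σ` in `Γ(a0,k,I)`. -/
noncomputable def outcome (G : Game n) (a0 : Profile G) (k : ℕ)
    (I : Hist G → Fin n) (σ : StratProfile G) : Profile G :=
  outcomeFrom G a0 k I σ []

/-- `σ` satisfies the no-harm principle: every stay action it prescribes, at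
every (on- or off-path) non-terminal node of the tree, does not harm any other
player relative to the reference point at that node. -/
def SatNHP (G : Game n) (a0 : Profile G) (k : ℕ) (I : Hist G → Fin n)
    (σ : StratProfile G) : Prop :=
  ∀ h, IsNode G a0 k I h → ¬ Terminal G a0 h →
    σ (I h) h = some (state G a0 h (I h)) →
    ∀ j, j ≠ I h → G.u j (refpt G a0 h) ≤ G.u j (state G a0 h)

/-- No-harm equilibrium of `Γ(a0,k,I)`: a valid strategy profile satisfying the
NHP such that at every non-terminal node the active player's choice is a best
response among deviations keeping the profile valid and NHP-compliant. -/
def NHE (G : Game n) (a0 : Profile G) (k : ℕ) (I : Hist G → Fin n)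
    (σ : StratProfile G) : Prop :=
  ValidProfile G a0 k I σ ∧ SatNHP G a0 k I σ ∧
  ∀ h, IsNode G a0 k I h → ¬ Terminal G a0 h →
    ∀ τ : Strategy G (I h),
      ValidProfile G a0 k I (Function.update σ (I h) τ) →
      SatNHP G a0 k I (Function.update σ (I h) τ) →
      G.u (I h) (outcomeFrom G a0 k I (Function.update σ (I h) τ) h) ≤
        G.u (I h) (outcomeFrom G a0 k I σ h)

/-- Subgame perfect equilibrium of `Γ(a0,k,I)` (no NHP constraint). -/
def SPE (G : Game n) (a0 : Profile G) (k : ℕ) (I : Hist G → Fin n)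
    (σ : StratProfile G) : Prop :=
  ValidProfile G a0 k I σ ∧
  ∀ h, IsNode G a0 k I h → ¬ Terminal G a0 h →
    ∀ τ : Strategy G (I h),
      ValidProfile G a0 k I (Function.update σ (I h) τ) →
      G.u (I h) (outcomeFrom G a0 k I (Function.update σ (I h) τ) h) ≤
        G.u (I h) (outcomeFrom G a0 k I σ h)

/-- `b` Pareto dominates `a`. -/
def ParetoDom (G : Game n) (b a : Profile G) : Prop :=
  (∀ i, G.u i a ≤ G.u i b) ∧ ∃ i, G.u i a < G.u i b

/-- `a` is Pareto optimal. -/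
def ParetoOpt (G : Game n) (a : Profile G) : Prop := ∀ b, ¬ ParetoDom G b a

/-- `b` strictly Pareto dominates `a`. -/
def StrictDom (G : Game n) (b a : Profile G) : Prop := ∀ i, G.u i a < G.u i b

/-- `a` is weakly Pareto optimal. -/
def WeakParetoOpt (G : Game n) (a : Profile G) : Prop := ∀ b, ¬ StrictDom G b a

/-- Preferences are strict: each utility function is injective on profiles. -/
def StrictPrefs (G : Game n) : Prop := ∀ i, Function.Injective (G.u i)


/-- A subgame perfect equilibrium of the NHP-constrained game, i.e. of
`Γ(a0,k,I)` restricted so that at every node only actions satisfying the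
no-harm principle are available: a valid NHP-compliant profile that is a best
response at every non-terminal node among the valid NHP-compliant profiles. -/
def ConstrainedSPE (G : Game n) (a0 : Profile G) (k : ℕ) (I : Hist G → Fin n)
    (σ : StratProfile G) : Prop :=
  ValidProfile G a0 k I σ ∧ SatNHP G a0 k I σ ∧
  ∀ h, IsNode G a0 k I h → ¬ Terminal G a0 h →
    ∀ τ : Strategy G (I h),
      ValidProfile G a0 k I (Function.update σ (I h) τ) →
      SatNHP G a0 k I (Function.update σ (I h) τ) →
      G.u (I h) (outcomeFrom G a0 k I (Function.update σ (I h) τ) h) ≤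
        G.u (I h) (outcomeFrom G a0 k I σ h)


section Aux

variable {n : ℕ} (G : Game n) (a0 : Profile G) (k : ℕ) (I : Hist G → Fin n)

/-- The set of choices available to the active player at `h` that satisfy the
no-harm principle. -/
def Dset (h : Hist G) : Set (Option (G.A (I h))) :=
  {c | availAct G a0 k h c ∧
    (c = some (state G a0 h (I h)) →
      ∀ j, j ≠ I h → G.u j (refpt G a0 h) ≤ G.u j (state G a0 h))}

lemma none_mem_Dset (h : Hist G) : (none : Option (G.A (I h))) ∈ Dset G a0 k I h := by
  constructor
  · intro a ha; cases ha
  · intro hc; cases hc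

lemma pickEx (W : Hist G → Profile G) (h : Hist G) :
    ∃ c ∈ Dset G a0 k I h, ∀ c' ∈ Dset G a0 k I h,
      G.u (I h) (W (h ++ [⟨I h, c'⟩])) ≤ G.u (I h) (W (h ++ [⟨I h, c⟩])) := by
  classical
  obtain ⟨c, hc, hmax⟩ := Set.exists_max_image (Dset G a0 k I h)
    (fun c => G.u (I h) (W (h ++ [⟨I h, c⟩]))) (Set.toFinite _) ⟨none, none_mem_Dset G a0 k I h⟩
  exact ⟨c, hc, hmax⟩

open Classical in
/-- Backward-induction value function with fuel. -/
noncomputable def V : ℕ → Hist G → Profile G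
  | 0, h => refpt G a0 h
  | (t+1), h =>
      if Terminal G a0 h then refpt G a0 h
      else V t (h ++ [⟨I h, Classical.choose (pickEx G a0 k I (V t) h)⟩])

/-- The optimal choice at `h` with fuel `t`. -/
noncomputable def pick (t : ℕ) (h : Hist G) : Option (G.A (I h)) :=
  Classical.choose (pickEx G a0 k I (V G a0 k I t) h)

lemma pick_mem (t : ℕ) (h : Hist G) : pick G a0 k I t h ∈ Dset G a0 k I h :=
  (Classical.choose_spec (pickEx G a0 k I (V G a0 k I t) h)).1

lemma pick_max (t : ℕ) (h : Hist G) : ∀ c' ∈ Dset G a0 k I h,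
    G.u (I h) (V G a0 k I t (h ++ [⟨I h, c'⟩])) ≤
      G.u (I h) (V G a0 k I t (h ++ [⟨I h, pick G a0 k I t h⟩])) :=
  (Classical.choose_spec (pickEx G a0 k I (V G a0 k I t) h)).2

open Classical in
lemma V_succ (t : ℕ) (h : Hist G) :
    V G a0 k I (t+1) h = if Terminal G a0 h then refpt G a0 h
      else V G a0 k I t (h ++ [⟨I h, pick G a0 k I t h⟩]) := rfl

/-- The backward-induction strategy profile. -/
noncomputable def sstar : StratProfile G := fun i h =>
  if e : I h = i then e ▸ pick G a0 k I (bound G k - h.length) h else none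

lemma sstar_eq (h : Hist G) :
    sstar G a0 k I (I h) h = pick G a0 k I (bound G k - h.length) h := by
  simp [sstar]

/-- Prefixes of nodes are nodes. -/
lemma IsNode.take' {G : Game n} {a0 : Profile G} {k : ℕ} {I : Hist G → Fin n} {h : Hist G}
    (hn : IsNode G a0 k I h) (s : ℕ) : IsNode G a0 k I (h.take s) := by
  have hlen : (h.take s).length = min s h.length := List.length_take
  constructor
  · intro t ht
    have ht2 : t < h.length := lt_of_lt_of_le (hlen ▸ ht) (min_le_right _ _)
    have hts : t < s := lt_of_lt_of_le (hlen ▸ ht) (min_le_left _ _)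
    have e1 : (h.take s).get ⟨t, ht⟩ = h.get ⟨t, ht2⟩ := by
      simp [List.get_eq_getElem, List.getElem_take]
    have e2 : (h.take s).take t = h.take t := by
      rw [List.take_take]; congr 1; omega
    rw [e1, e2]; exact hn.mover t ht2
  · intro t ht
    have ht2 : t < h.length := lt_of_lt_of_le (hlen ▸ ht) (min_le_right _ _)
    have hts : t < s := lt_of_lt_of_le (hlen ▸ ht) (min_le_left _ _)
    have e1 : (h.take s).get ⟨t, ht⟩ = h.get ⟨t, ht2⟩ := by
      simp [List.get_eq_getElem, List.getElem_take]
    have e2 : (h.take s).take t = h.take t := by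
      rw [List.take_take]; congr 1; omega
    rw [e1, e2]; exact hn.avail t ht2
  · intro t ht
    have ht2 : t < h.length := lt_of_lt_of_le (hlen ▸ ht) (min_le_right _ _)
    have hts : t < s := lt_of_lt_of_le (hlen ▸ ht) (min_le_left _ _)
    have e2 : (h.take s).take t = h.take t := by
      rw [List.take_take]; congr 1; omega
    rw [e2]; exact hn.nonterm t ht2

/-- Extending a non-terminal node by an available move yields a node. -/
lemma IsNode.snoc' {G : Game n} {a0 : Profile G} {k : ℕ} {I : Hist G → Fin n} {h : Hist G}
    (hn : IsNode G a0 k I h) (hterm : ¬ Terminal G a0 h) (m : Move G)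
    (hm1 : m.1 = I h) (hm2 : availAct G a0 k h m.2) : IsNode G a0 k I (h ++ [m]) := by
  have hlen : (h ++ [m]).length = h.length + 1 := by simp
  constructor
  · intro t ht
    rcases lt_or_eq_of_le (Nat.le_of_lt_succ (hlen ▸ ht)) with h1 | h1
    · have e1 : (h ++ [m]).get ⟨t, ht⟩ = h.get ⟨t, h1⟩ := by
        simp [List.get_eq_getElem, List.getElem_append_left h1]
      have e2 : (h ++ [m]).take t = h.take t :=
        List.take_append_of_le_length (le_of_lt h1)
      rw [e1, e2]; exact hn.mover t h1
    · have e1 : (h ++ [m]).get ⟨t, ht⟩ = m := by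
        simp [List.get_eq_getElem]; exact List.getElem_concat_length h1 ht
      have e2 : (h ++ [m]).take t = h := by
        rw [h1]; exact List.take_left
      rw [e1, e2]; exact hm1
  · intro t ht
    rcases lt_or_eq_of_le (Nat.le_of_lt_succ (hlen ▸ ht)) with h1 | h1
    · have e1 : (h ++ [m]).get ⟨t, ht⟩ = h.get ⟨t, h1⟩ := by
        simp [List.get_eq_getElem, List.getElem_append_left h1]
      have e2 : (h ++ [m]).take t = h.take t :=
        List.take_append_of_le_length (le_of_lt h1)
      rw [e1, e2]; exact hn.avail t h1
    · have e1 : (h ++ [m]).get ⟨t, ht⟩ = m := by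
        simp [List.get_eq_getElem]; exact List.getElem_concat_length h1 ht
      have e2 : (h ++ [m]).take t = h := by
        rw [h1]; exact List.take_left
      rw [e1, e2]; exact hm2
  · intro t ht
    rcases lt_or_eq_of_le (Nat.le_of_lt_succ (hlen ▸ ht)) with h1 | h1
    · have e2 : (h ++ [m]).take t = h.take t :=
        List.take_append_of_le_length (le_of_lt h1)
      rw [e2]; exact hn.nonterm t h1
    · have e2 : (h ++ [m]).take t = h := by
        rw [h1]; exact List.take_left
      rw [e2]; exact hterm

lemma count_sum_eq_length (L : List (Fin n)) : ∑ j : Fin n, L.count j = L.length := by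
  induction L with
  | nil => simp
  | cons a L ih =>
    simp only [List.count_cons, List.length_cons]
    rw [Finset.sum_add_distrib, ih]
    have : (∑ j : Fin n, if (a == j) = true then 1 else 0) = 1 := by
      simp [beq_iff_eq]
    omega

/-- At a multiple of `n`, all players have been active equally often. -/
lemma count_at_multiple (hn2 : 2 ≤ n) (hI : Admissible G a0 k I) {h : Hist G}
    (hn : IsNode G a0 k I h) (r : ℕ) (hr : r * n ≤ h.length) (i : Fin n) :
    ((h.take (r * n)).map Sigma.fst).count i = r := by
  set L := (h.take (r * n)).map Sigma.fst with hL
  have hlen : L.length = r * n := by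
    simp [hL, List.length_take]; omega
  have hsum : ∑ j : Fin n, L.count j = r * n := by rw [count_sum_eq_length, hlen]
  have hadm : ∀ i j : Fin n, L.count i ≤ L.count j + 1 := hI _ (hn.take' (r * n))
  haveI : Nonempty (Fin n) := ⟨⟨0, by omega⟩⟩
  have hne : (Finset.univ : Finset (Fin n)).Nonempty := Finset.univ_nonempty
  rcases lt_trichotomy (L.count i) r with hlt | heq | hgt
  · exfalso
    have h1 : ∀ j ∈ (Finset.univ : Finset (Fin n)), L.count j ≤ r := by
      intro j _; have := hadm j i; omega
    have h2 : ∃ j ∈ (Finset.univ : Finset (Fin n)), L.count j < r := ⟨i, Finset.mem_univ i, hlt⟩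
    have := Finset.sum_lt_sum h1 h2
    rw [hsum] at this
    simp [Finset.sum_const, Finset.card_univ, mul_comm] at this
  · exact heq
  · exfalso
    have h1 : ∀ j ∈ (Finset.univ : Finset (Fin n)), r ≤ L.count j := by
      intro j _; have := hadm i j; omega
    have h2 : ∃ j ∈ (Finset.univ : Finset (Fin n)), r < L.count j := ⟨i, Finset.mem_univ i, hgt⟩
    have := Finset.sum_lt_sum h1 h2
    rw [hsum] at this
    simp [Finset.sum_const, Finset.card_univ, mul_comm] at this

/-- The bound on the number of non-pass moves. -/
def Mb : ℕ := k * Fintype.card (Option (Move G) × Profile G)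

/-- Every node has length at most `(Mb+1) * n`. -/
lemma node_len_le (hn2 : 2 ≤ n) (hI : Admissible G a0 k I) (hk : 0 < k) {h : Hist G}
    (hn : IsNode G a0 k I h) : h.length ≤ (Mb G k + 1) * n := by
  classical
  by_contra hlen
  push_neg at hlen
  have hlen' : (Mb G k + 1) * n + 1 ≤ h.length := hlen
  -- the set of non-pass positions
  set S : Finset ℕ := (Finset.range h.length).filter
    (fun t => ∃ m : Move G, h[t]? = some m ∧ m.2 ≠ none) with hS
  set f : ℕ → Option (Move G) × Profile G :=
    (fun t => (h[t]?, state G a0 (h.take t))) with hf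
  -- each fiber of f on S has at most k elements
  have hfiber : ∀ b ∈ S.image f, (S.filter (fun t => f t = b)).card ≤ k := by
    intro b _
    by_contra hcard
    push_neg at hcard
    set F := S.filter (fun t => f t = b) with hF
    have hFne : F.Nonempty := Finset.card_pos.mp (by omega)
    set t0 := F.max' hFne with ht0
    have ht0F : t0 ∈ F := F.max'_mem hFne
    have ht0S : t0 ∈ S := Finset.mem_of_mem_filter t0 ht0F
    have ht0lt : t0 < h.length := Finset.mem_range.mp (Finset.mem_of_mem_filter t0 ht0S)
    obtain ⟨hm0, hm0pass⟩ : ∃ m : Move G, h[t0]? = some m ∧ m.2 ≠ none := by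
      have := Finset.mem_filter.mp ht0S; exact this.2
    obtain ⟨m, hm, hmpass⟩ := Finset.mem_filter.mp ht0S |>.2
    obtain ⟨a, ha⟩ : ∃ a, m.2 = some a := Option.ne_none_iff_exists'.mp hmpass
    -- the availability constraint at t0
    have havail := hn.avail t0 ht0lt
    have hget : h.get ⟨t0, ht0lt⟩ = m := by
      have : h[t0]? = some (h[t0]'ht0lt) := List.getElem?_eq_getElem ht0lt
      rw [hm] at this
      simpa [List.get_eq_getElem] using (Option.some.inj this).symm
    rw [hget, ha] at havail
    have hcnt : countAct G a0 (h.take t0) ⟨m.1, some a⟩ < k := havail a rfl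
    have hmm : (⟨m.1, some a⟩ : Move G) = m := by
      rw [← ha]
    rw [hmm] at hcnt
    -- but at least k earlier positions witness the same (move, state) pair
    have hsub : F.erase t0 ⊆ (Finset.range (h.take t0).length).filter
        (fun s => (h.take t0)[s]? = some m ∧
          state G a0 ((h.take t0).take s) = state G a0 (h.take t0)) := by
      intro s hs
      have hsne : s ≠ t0 := (Finset.mem_erase.mp hs).1
      have hsF : s ∈ F := (Finset.mem_erase.mp hs).2
      have hslt : s < t0 := lt_of_le_of_ne (F.le_max' s hsF) hsne
      have hsb : (h[s]?, state G a0 (h.take s)) = (h[t0]?, state G a0 (h.take t0)) := by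
        have e1 := (Finset.mem_filter.mp hsF).2
        have e2 := (Finset.mem_filter.mp ht0F).2
        simpa [hf] using e1.trans e2.symm
      have hs1 : h[s]? = some m := by
        have := congrArg Prod.fst hsb; simp only at this; rw [this, hm]
      have hs2 : state G a0 (h.take s) = state G a0 (h.take t0) := by
        have := congrArg Prod.snd hsb; simpa using this
      refine Finset.mem_filter.mpr ⟨?_, ?_, ?_⟩
      · rw [Finset.mem_range, List.length_take]; omega
      · rw [List.getElem?_take]; simp [hslt, hs1]
      · rw [List.take_take]
        have : min s t0 = s := by omega
        rw [this, hs2]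
    have hk2 : k ≤ (F.erase t0).card := by
      have := Finset.card_erase_of_mem ht0F
      omega
    have := Finset.card_le_card hsub
    rw [countAct] at hcnt
    omega
  have hScard : S.card ≤ Mb G k := by
    have h1 := Finset.card_le_mul_card_image S k hfiber
    have h2 : (S.image f).card ≤ Fintype.card (Option (Move G) × Profile G) :=
      le_trans (Finset.card_le_card (Finset.subset_univ _)) (le_of_eq (Finset.card_univ))
    calc S.card ≤ k * (S.image f).card := h1
      _ ≤ k * Fintype.card (Option (Move G) × Profile G) := Nat.mul_le_mul_left k h2
      _ = Mb G k := rfl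
  -- pigeonhole: some aligned block of n consecutive positions is all-pass
  have hblock : ∃ r < Mb G k + 1, ∀ t, r * n ≤ t → t < (r+1) * n →
      ∀ m : Move G, h[t]? = some m → m.2 = none := by
    by_contra hb
    push_neg at hb
    choose g hg1 hg2 hg3 using hb
    set g' : ℕ → ℕ := fun r => if hr : r < Mb G k + 1 then g r hr else 0 with hg'
    have hgg : ∀ r (hr : r < Mb G k + 1), g' r = g r hr := fun r hr => dif_pos hr
    have hinj : Set.InjOn g' ((Finset.range (Mb G k + 1)) : Finset ℕ) := by
      intro r1 hr1 r2 hr2 he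
      simp only [Finset.coe_range, Set.mem_Iio] at hr1 hr2
      by_contra hne
      rw [hgg r1 hr1, hgg r2 hr2] at he
      rcases Nat.lt_or_ge r1 r2 with hlt | hge
      · have h1 := hg2 r1 hr1
        have h2 := hg1 r2 hr2
        have : (r1 + 1) * n ≤ r2 * n := Nat.mul_le_mul_right n hlt
        omega
      · have hlt : r2 < r1 := by omega
        have h1 := hg2 r2 hr2
        have h2 := hg1 r1 hr1
        have : (r2 + 1) * n ≤ r1 * n := Nat.mul_le_mul_right n hlt
        omega
    have hmaps : ∀ r ∈ Finset.range (Mb G k + 1), g' r ∈ S := by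
      intro r hr
      have hr' : r < Mb G k + 1 := Finset.mem_range.mp hr
      rw [hgg r hr']
      have h1 : g r hr' < h.length := by
        have := hg2 r hr'
        have h3 : (r + 1) * n ≤ (Mb G k + 1) * n := Nat.mul_le_mul_right n (by omega)
        omega
      obtain ⟨m, hm1, hm2⟩ := hg3 r hr'
      exact Finset.mem_filter.mpr ⟨Finset.mem_range.mpr h1, m, hm1, hm2⟩
    have := Finset.card_le_card_of_injOn g' hmaps hinj
    simp at this
    omega
  obtain ⟨r, hr, hpass⟩ := hblock
  -- the prefix ending at the block end is terminal by all-pass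
  set hp := h.take ((r+1) * n) with hhp
  have hle1 : (r+1) * n ≤ (Mb G k + 1) * n := Nat.mul_le_mul_right n (by omega)
  have hle2 : (r+1) * n < h.length := by omega
  have hplen : hp.length = (r+1) * n := by
    simp [hhp, List.length_take]; omega
  have hdroplen : (hp.drop (r * n)).length = n := by
    rw [List.length_drop, hplen, add_mul, one_mul]; omega
  have hterm : TerminalPass G hp := by
    have hsub : hp.length - n = r * n := by rw [hplen, add_mul, one_mul]; omega
    refine ⟨by rw [hplen, add_mul, one_mul]; omega, ?_, ?_⟩
    · intro m hm
      rw [hsub] at hm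
      obtain ⟨j, hj, hj2⟩ := List.mem_iff_getElem.mp hm
      have hj' : j < n := by rwa [hdroplen] at hj
      have hrj : r * n + j < (r + 1) * n := by rw [add_mul, one_mul]; omega
      have hrj2 : r * n + j < hp.length := by omega
      have hrj3 : r * n + j < h.length := by omega
      have he1 : (hp.drop (r * n))[j] = hp[r * n + j]'hrj2 := List.getElem_drop
      have he2 : hp[r * n + j]'hrj2 = h[r * n + j]'hrj3 := List.getElem_take
      have hsome : h[r * n + j]? = some m := by
        rw [List.getElem?_eq_getElem hrj3]
        rw [← he2, ← he1, hj2]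
      exact hpass (r * n + j) (by omega) hrj m hsome
    · intro i
      rw [hsub]
      have hc1 : ((h.take (r * n)).map Sigma.fst).count i = r :=
        count_at_multiple G a0 k I hn2 hI hn r (by omega) i
      have hc2 : ((h.take ((r+1) * n)).map Sigma.fst).count i = r + 1 :=
        count_at_multiple G a0 k I hn2 hI hn (r+1) (by omega) i
      have hsplit : hp = h.take (r * n) ++ hp.drop (r * n) := by
        conv_lhs => rw [← List.take_append_drop (r * n) hp]
        congr 1
        rw [hhp, List.take_take]
        congr 1
        have : r * n ≤ (r + 1) * n := Nat.mul_le_mul_right n (by omega)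
        omega
      have : ((hp.drop (r * n)).map Sigma.fst).count i = 1 := by
        have := hc2
        rw [← hhp] at this
        rw [hsplit, List.map_append, List.count_append, hc1] at this
        omega
      have hpos : 0 < ((hp.drop (r * n)).map Sigma.fst).count i := by omega
      obtain ⟨m, hm, hm2⟩ := List.mem_map.mp (List.count_pos_iff.mp hpos)
      exact ⟨m, hm, hm2⟩
  exact hn.nonterm ((r+1) * n) hle2 (Or.inr hterm)

/-- The generous bound dominates the real bound. -/
lemma Mb_le_bound (hn2 : 2 ≤ n) : (Mb G k + 1) * n ≤ bound G k := by
  have hcard : Fintype.card (Option (Move G) × Profile G) =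
      ((∑ i, Fintype.card (G.A i)) + n + 1) * Fintype.card (Profile G) := by
    rw [Fintype.card_prod, Fintype.card_option, Fintype.card_sigma]
    congr 2
    simp [Fintype.card_option, Finset.sum_add_distrib]
  set S := ∑ i, Fintype.card (G.A i) with hSdef
  set C := Fintype.card (Profile G) with hCdef
  have hS : n ≤ S := by
    have hpos : ∀ i : Fin n, 1 ≤ Fintype.card (G.A i) := fun i => Fintype.card_pos
    calc n = ∑ _i : Fin n, 1 := by simp
      _ ≤ S := Finset.sum_le_sum (fun i _ => hpos i)
  rw [Mb, hcard, bound]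
  have h1 : S + n + 1 ≤ 2 * (S + 2) := by omega
  have hP : k * (((S + n + 1)) * C) ≤ 2 * ((k+2)*(C+2)*(S+2)) := by
    calc k * ((S + n + 1) * C) ≤ (k+2) * ((2*(S+2))*(C+2)) :=
          Nat.mul_le_mul (by omega) (Nat.mul_le_mul h1 (by omega))
      _ = 2 * ((k+2)*(C+2)*(S+2)) := by ring
  set P := (k+2)*(C+2)*(S+2) with hPdef
  calc (k * ((S + n + 1) * C) + 1) * n ≤ (2*P+1)*n := Nat.mul_le_mul_right n (by omega)
    _ ≤ (4*(P+2))*(n+2) := Nat.mul_le_mul (by omega) (by omega)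
    _ = (P+2)*(n+2)*4 := by ring

lemma sstar_valid : ValidProfile G a0 k I (sstar G a0 k I) := by
  intro h hnode hterm
  rw [sstar_eq]
  exact (pick_mem G a0 k I (bound G k - h.length) h).1

lemma sstar_nhp : SatNHP G a0 k I (sstar G a0 k I) := by
  intro h hnode hterm hstay j hj
  rw [sstar_eq] at hstay
  exact (pick_mem G a0 k I (bound G k - h.length) h).2 hstay j hj

lemma lemA (hn2 : 2 ≤ n) (hI : Admissible G a0 k I) (hk : 0 < k) :
    ∀ (t : ℕ) (h : Hist G), IsNode G a0 k I h → (Mb G k + 1) * n + 1 ≤ h.length + t →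
      refpt G a0 (playN G a0 I (sstar G a0 k I) t h) =
        V G a0 k I (bound G k + 1 - h.length) h := by
  intro t
  induction t with
  | zero =>
    intro h hnode hbig
    exact absurd (node_len_le G a0 k I hn2 hI hk hnode) (by omega)
  | succ t ih =>
    intro h hnode hbig
    have hlen : h.length ≤ bound G k :=
      le_trans (node_len_le G a0 k I hn2 hI hk hnode) (Mb_le_bound G k hn2)
    have hfuel : bound G k + 1 - h.length = (bound G k - h.length) + 1 := by omega
    by_cases hterm : Terminal G a0 h
    · rw [hfuel, V_succ, if_pos hterm]
      simp [playN, hterm]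
    · have hpm := pick_mem G a0 k I (bound G k - h.length) h
      set m0 : Move G := ⟨I h, sstar G a0 k I (I h) h⟩ with hm0
      have hchild : IsNode G a0 k I (h ++ [m0]) := by
        refine hnode.snoc' hterm m0 rfl ?_
        show availAct G a0 k h (sstar G a0 k I (I h) h)
        rw [sstar_eq]; exact hpm.1
      have hclen : (h ++ [m0]).length = h.length + 1 := by simp
      have hih := ih (h ++ [m0]) hchild (by omega)
      rw [hclen] at hih
      have hstep : playN G a0 I (sstar G a0 k I) (t+1) h =
          playN G a0 I (sstar G a0 k I) t (h ++ [m0]) := by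
        simp [playN, hterm, hm0]
      rw [hstep, hih, hfuel, V_succ, if_neg hterm]
      have he : bound G k + 1 - (h.length + 1) = bound G k - h.length := by omega
      rw [he, hm0, sstar_eq]

lemma lemB (hn2 : 2 ≤ n) (hI : Admissible G a0 k I) (hk : 0 < k) (i : Fin n)
    (τ : Strategy G i)
    (hv : ValidProfile G a0 k I (Function.update (sstar G a0 k I) i τ))
    (hs : SatNHP G a0 k I (Function.update (sstar G a0 k I) i τ)) :
    ∀ (t : ℕ) (h : Hist G), IsNode G a0 k I h → (Mb G k + 1) * n + 1 ≤ h.length + t →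
      G.u i (refpt G a0 (playN G a0 I (Function.update (sstar G a0 k I) i τ) t h)) ≤
        G.u i (V G a0 k I (bound G k + 1 - h.length) h) := by
  intro t
  induction t with
  | zero =>
    intro h hnode hbig
    exact absurd (node_len_le G a0 k I hn2 hI hk hnode) (by omega)
  | succ t ih =>
    intro h hnode hbig
    have hlen : h.length ≤ bound G k :=
      le_trans (node_len_le G a0 k I hn2 hI hk hnode) (Mb_le_bound G k hn2)
    have hfuel : bound G k + 1 - h.length = (bound G k - h.length) + 1 := by omega
    by_cases hterm : Terminal G a0 h
    · rw [hfuel, V_succ, if_pos hterm]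
      simp [playN, hterm]
    · set σ' := Function.update (sstar G a0 k I) i τ with hσ'
      have havail : availAct G a0 k h (σ' (I h) h) := hv h hnode hterm
      set m0 : Move G := ⟨I h, σ' (I h) h⟩ with hm0
      have hchild : IsNode G a0 k I (h ++ [m0]) :=
        hnode.snoc' hterm m0 rfl havail
      have hclen : (h ++ [m0]).length = h.length + 1 := by simp
      have hih := ih (h ++ [m0]) hchild (by omega)
      rw [hclen] at hih
      have hfc : bound G k + 1 - (h.length + 1) = bound G k - h.length := by omega
      rw [hfc] at hih
      have hmem : σ' (I h) h ∈ Dset G a0 k I h :=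
        ⟨havail, fun hstay j hj => hs h hnode hterm hstay j hj⟩
      have hkey : G.u i (V G a0 k I (bound G k - h.length) (h ++ [m0])) ≤
          G.u i (V G a0 k I (bound G k + 1 - h.length) h) := by
        rw [hfuel, V_succ, if_neg hterm]
        by_cases he : I h = i
        · rw [← he]
          exact pick_max G a0 k I (bound G k - h.length) h (σ' (I h) h) hmem
        · have hcc : σ' (I h) h = pick G a0 k I (bound G k - h.length) h := by
            rw [hσ', Function.update_of_ne he, sstar_eq]
          rw [hm0, hcc]
      have hstep : playN G a0 I σ' (t+1) h =
          playN G a0 I σ' t (h ++ [m0]) := by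
        simp [playN, hterm, hm0]
      rw [hstep]
      exact le_trans hih hkey

end Aux

/-- The NHP-constrained game is a finite extensive form game
with perfect information (node lengths uniformly bounded) possessing a pure
subgame perfect equilibrium, and every pure subgame perfect equilibrium of the
constrained game is a no-harm equilibrium of `Γ(a0,k,I)`. -/
theorem constrained_spe_exists_and_is_nhe {n : ℕ} (hn : 2 ≤ n) (G : Game n)
    (hG : StrictPrefs G) (a0 : Profile G) (k : ℕ) (hk : 0 < k)
    (I : Hist G → Fin n) (hI : Admissible G a0 k I) :
    (∃ B : ℕ, ∀ h : Hist G, IsNode G a0 k I h → h.length ≤ B) ∧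
    (∃ σ : StratProfile G, ConstrainedSPE G a0 k I σ) ∧
    (∀ σ : StratProfile G, ConstrainedSPE G a0 k I σ → NHE G a0 k I σ) := by
  have hble := Mb_le_bound G k hn
  refine ⟨⟨bound G k, fun h hnd => le_trans (node_len_le G a0 k I hn hI hk hnd) hble⟩,
    ⟨sstar G a0 k I, sstar_valid G a0 k I, sstar_nhp G a0 k I, ?_⟩,
    fun σ hσ => hσ⟩
  intro h hnode hterm τ hv hs
  have hlen := node_len_le G a0 k I hn hI hk hnode
  have e1 : outcomeFrom G a0 k I (sstar G a0 k I) h =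
      V G a0 k I (bound G k + 1 - h.length) h :=
    lemA G a0 k I hn hI hk (bound G k + 1) h hnode (by omega)
  have e2 := lemB G a0 k I hn hI hk (I h) τ hv hs (bound G k + 1) h hnode (by omega)
  have e1' : refpt G a0 (playN G a0 I (sstar G a0 k I) (bound G k + 1) h) =
      V G a0 k I (bound G k + 1 - h.length) h := e1
  exact e2.trans (le_of_eq (congrArg _ e1'.symm))

end NoHarm
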